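/- Define i_n : V_n → V_1^{⊗n} by i_n(v_k) = Σ_{|a|=k} q^{inv(a)} v_{a}, and π_n : V_1^{⊗n} → V_n by π_n(v_a) = q^{-coinv(a)} v^{|a|}, where for a ∈ {0,1}^n, inv(a) = #{i<j : a_i > a_j}, coinv(a) = #{i<j : a_i < a_j}, v_a = v_{a_1}⊗···⊗v_{a_n}, and v^k = v_k/[n,k] is the dual canonical basis of V_n. Then π_n ∘ i_n = id_{V_n}. (Key computation: Σ_{|a|=k} q^{inv(a) - coinv(a)} = [n,k].) -/

import Mathlib

set_option synthInstance.maxHeartbeats 1000000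
set_option maxHeartbeats 1000000

noncomputable section

/-- The ground field `ℂ(q)`. -/
abbrev K : Type := RatFunc ℂ

/-- The indeterminate `q ∈ ℂ(q)`. -/
def q : K := RatFunc.X

/-- The quantum integer `[a] = (qᵃ - q⁻ᵃ)/(q - q⁻¹)`. -/
def qint (a : ℤ) : K := (q ^ a - q ^ (-a)) / (q - q⁻¹)

/-- The quantum factorial `[a]! = [a][a-1]⋯[1]`. -/
def qfact : ℕ → K
  | 0 => 1
  | a + 1 => qint (a + 1) * qfact a

/-- The balanced Gaussian binomial coefficient `[n,k] = [n]!/([k]![n-k]!)`. -/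
def qbinom (n k : ℕ) : K := qfact n / (qfact k * qfact (n - k))

/-- The matrix of `E` on `V_n` in the canonical basis: `E v_k = [k+1] v_{k+1}`. -/
def Emat (n : ℕ) : Matrix (Fin (n + 1)) (Fin (n + 1)) K :=
  Matrix.of fun i j => if (i : ℕ) = (j : ℕ) + 1 then qint ((j : ℕ) + 1) else 0

/-- The matrix of `F` on `V_n` in the canonical basis: `F v_k = [n-k+1] v_{k-1}`. -/
def Fmat (n : ℕ) : Matrix (Fin (n + 1)) (Fin (n + 1)) K :=
  Matrix.of fun i j => if (i : ℕ) + 1 = (j : ℕ) then qint ((n : ℤ) - (j : ℕ) + 1) else 0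

/-- The matrix of `K` on `V_n`: `K v_k = q^{2k-n} v_k`. -/
def Kmat (n : ℕ) : Matrix (Fin (n + 1)) (Fin (n + 1)) K :=
  Matrix.diagonal fun k => q ^ (2 * (k : ℤ) - (n : ℤ))

/-- The matrix of `K⁻¹` on `V_n`: `K⁻¹ v_k = q^{n-2k} v_k`. -/
def Kinvmat (n : ℕ) : Matrix (Fin (n + 1)) (Fin (n + 1)) K :=
  Matrix.diagonal fun k => q ^ ((n : ℤ) - 2 * (k : ℤ))

/-- The number of inversions `#{i<j : a_i > a_j}` of a `{0,1}`-sequence. -/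
def invf (n : ℕ) (a : Fin n → Fin 2) : ℕ :=
  (Finset.univ.filter fun p : Fin n × Fin n => p.1 < p.2 ∧ a p.2 < a p.1).card

/-- The number of coinversions `#{i<j : a_i < a_j}` of a `{0,1}`-sequence. -/
def coinvf (n : ℕ) (a : Fin n → Fin 2) : ℕ :=
  (Finset.univ.filter fun p : Fin n × Fin n => p.1 < p.2 ∧ a p.1 < a p.2).card

/-- The number of ones `|a|` of a `{0,1}`-sequence, as an element of `Fin (n+1)`. -/
def wtFin (n : ℕ) (a : Fin n → Fin 2) : Fin (n + 1) :=
  ⟨∑ i, (a i : ℕ), by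
    have h : (∑ i, (a i : ℕ)) ≤ ∑ _i : Fin n, 1 :=
      Finset.sum_le_sum fun i _ => Nat.lt_succ_iff.mp (a i).is_lt
    simp only [Finset.sum_const, Finset.card_univ, Fintype.card_fin, smul_eq_mul,
      mul_one] at h
    omega⟩

/-- The inclusion `i_n : V_n → V_1^{⊗n}`, `v_k ↦ Σ_{|a|=k} q^{inv(a)} v_a`, written on
coordinate vectors. -/
def Imap (n : ℕ) (g : Fin (n + 1) → K) : (Fin n → Fin 2) → K := fun a =>
  q ^ invf n a * g (wtFin n a)

/-- The projection `π_n : V_1^{⊗n} → V_n`, `v_a ↦ q^{-coinv(a)} v^{|a|}`, written on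
coordinate vectors (with `v^k = [n,k]⁻¹ v_k` the dual canonical basis of `V_n`). -/
def Pmap (n : ℕ) (f : (Fin n → Fin 2) → K) : Fin (n + 1) → K := fun k =>
  ∑ a ∈ Finset.univ.filter (fun a : Fin n → Fin 2 => wtFin n a = k),
    q ^ (-(coinvf n a : ℤ)) * (qbinom n (k : ℕ))⁻¹ * f a

/-! ### Auxiliary lemmas -/

lemma q_ne_zero : q ≠ 0 := RatFunc.X_ne_zero

lemma q_pow_ne_one {m : ℕ} (hm : m ≠ 0) : q ^ m ≠ 1 := by
  intro h
  have h2 : (algebraMap (Polynomial ℂ) (RatFunc ℂ)) (Polynomial.X ^ m) =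
      (algebraMap (Polynomial ℂ) (RatFunc ℂ)) 1 := by
    simpa [q, map_pow, RatFunc.algebraMap_X] using h
  have h3 := RatFunc.algebraMap_injective ℂ h2
  have := congrArg Polynomial.natDegree h3
  simp [Polynomial.natDegree_X_pow] at this
  exact hm this

lemma qden_ne_zero : q - q⁻¹ ≠ 0 := by
  intro h
  have hq := q_ne_zero
  have h1 : q = q⁻¹ := sub_eq_zero.mp h
  have h2 : q ^ 2 = 1 := by
    rw [pow_two]; nth_rewrite 2 [h1]; field_simp
  exact q_pow_ne_one (by norm_num) h2

lemma qzpow_sub_ne_zero {a : ℤ} (ha : a ≠ 0) : q ^ a - q ^ (-a) ≠ 0 := by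
  intro h
  have hq := q_ne_zero
  have h1 : q ^ a = q ^ (-a) := sub_eq_zero.mp h
  have h2 : q ^ (2 * a) = 1 := by
    rw [two_mul, zpow_add₀ hq]; nth_rewrite 1 [h1]
    rw [← zpow_add₀ hq, neg_add_cancel, zpow_zero]
  rcases lt_or_gt_of_ne ha with hlt | hgt
  · have h3 : q ^ (2 * (-a)) = 1 := by
      rw [mul_neg, zpow_neg, h2, inv_one]
    have : q ^ ((2 * (-a)).toNat) = 1 := by
      rw [← zpow_natCast, Int.toNat_of_nonneg (by omega)]; exact h3
    exact q_pow_ne_one (by omega) this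
  · have : q ^ ((2 * a).toNat) = 1 := by
      rw [← zpow_natCast, Int.toNat_of_nonneg (by omega)]; exact h2
    exact q_pow_ne_one (by omega) this

lemma qint_ne_zero {a : ℤ} (ha : a ≠ 0) : qint a ≠ 0 :=
  div_ne_zero (qzpow_sub_ne_zero ha) qden_ne_zero

lemma qint_add (a b : ℤ) : qint (a + b) = q ^ a * qint b + q ^ (-b) * qint a := by
  unfold qint
  rw [mul_div_assoc', mul_div_assoc', ← add_div]
  congr 1
  have hq := q_ne_zero
  rw [neg_add, zpow_add₀ hq, zpow_add₀ hq]
  ring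

lemma qfact_ne_zero (n : ℕ) : qfact n ≠ 0 := by
  induction n with
  | zero => simp [qfact]
  | succ m ih =>
    rw [qfact]
    exact mul_ne_zero (qint_ne_zero (by positivity)) ih

lemma qbinom_ne_zero (n k : ℕ) : qbinom n k ≠ 0 :=
  div_ne_zero (qfact_ne_zero n) (mul_ne_zero (qfact_ne_zero k) (qfact_ne_zero _))

lemma qbinom_zero (n : ℕ) : qbinom n 0 = 1 := by
  simp [qbinom, qfact, qfact_ne_zero n]

lemma qbinom_self (n : ℕ) : qbinom n n = 1 := by
  simp [qbinom, qfact, qfact_ne_zero n]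

lemma qbinom_rec (n k' : ℕ) (h : k' + 1 ≤ n) :
    qbinom (n + 1) (k' + 1) =
      q ^ (-((k' : ℤ) + 1)) * qbinom n (k' + 1) + q ^ ((n : ℤ) - k') * qbinom n k' := by
  have h1 : qfact (n + 1) = qint (n + 1) * qfact n := rfl
  have h2 : qfact (k' + 1) = qint (k' + 1) * qfact k' := rfl
  have hnk : n - k' = (n - k' - 1) + 1 := by omega
  have h3 : qfact (n - k') = qint ((n : ℤ) - k') * qfact (n - k' - 1) := by
    rw [hnk, qfact]
    congr 2
    omega
  have e1 : n + 1 - (k' + 1) = n - k' := by omega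
  have e2 : n - (k' + 1) = n - k' - 1 := by omega
  have key : qint ((n : ℤ) + 1) =
      q ^ ((n : ℤ) - k') * qint ((k' : ℤ) + 1) + q ^ (-((k' : ℤ) + 1)) * qint ((n : ℤ) - k') := by
    have := qint_add ((n : ℤ) - k') ((k' : ℤ) + 1)
    rw [show (n : ℤ) - k' + ((k' : ℤ) + 1) = (n : ℤ) + 1 by ring] at this
    rw [this]
  unfold qbinom
  rw [e1, e2, h1, h2, h3]
  have hk1 : qint ((k' : ℤ) + 1) ≠ 0 := qint_ne_zero (by positivity)
  have hnk1 : qint ((n : ℤ) - k') ≠ 0 := qint_ne_zero (by omega)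
  have hf1 := qfact_ne_zero n
  have hf2 := qfact_ne_zero k'
  have hf3 := qfact_ne_zero (n - k' - 1)
  field_simp
  rw [key]
  ring

/-! ### Combinatorics of inversions -/

/-- The number of ones as a natural number. -/
def wt (n : ℕ) (a : Fin n → Fin 2) : ℕ := ∑ i, (a i : ℕ)

lemma wt_le (n : ℕ) (a : Fin n → Fin 2) : wt n a ≤ n := by
  have h : (∑ i, (a i : ℕ)) ≤ ∑ _i : Fin n, 1 :=
    Finset.sum_le_sum fun i _ => Nat.lt_succ_iff.mp (a i).is_lt
  simpa [wt] using h

lemma wt_cons (n : ℕ) (x : Fin 2) (b : Fin n → Fin 2) :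
    wt (n + 1) (Fin.cons x b) = (x : ℕ) + wt n b := by
  simp [wt, Fin.sum_univ_succ]

lemma invf_cons (n : ℕ) (x : Fin 2) (b : Fin n → Fin 2) :
    invf (n + 1) (Fin.cons x b) =
      (Finset.univ.filter fun j : Fin n => b j < x).card + invf n b := by
  unfold invf
  rw [Finset.card_filter, Finset.card_filter, Finset.card_filter,
    Fintype.sum_prod_type, Fin.sum_univ_succ]
  congr 1
  · rw [Fin.sum_univ_succ]
    simp [Fin.cons_zero, Fin.cons_succ, Fin.succ_pos]
  · rw [Fintype.sum_prod_type]
    apply Finset.sum_congr rfl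
    intro i _
    rw [Fin.sum_univ_succ]
    simp [Fin.cons_succ, Fin.succ_lt_succ_iff]

lemma coinvf_cons (n : ℕ) (x : Fin 2) (b : Fin n → Fin 2) :
    coinvf (n + 1) (Fin.cons x b) =
      (Finset.univ.filter fun j : Fin n => x < b j).card + coinvf n b := by
  unfold coinvf
  rw [Finset.card_filter, Finset.card_filter, Finset.card_filter,
    Fintype.sum_prod_type, Fin.sum_univ_succ]
  congr 1
  · rw [Fin.sum_univ_succ]
    simp [Fin.cons_zero, Fin.cons_succ, Fin.succ_pos]
  · rw [Fintype.sum_prod_type]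
    apply Finset.sum_congr rfl
    intro i _
    rw [Fin.sum_univ_succ]
    simp [Fin.cons_succ, Fin.succ_lt_succ_iff]

lemma card_lt_zero (n : ℕ) (b : Fin n → Fin 2) :
    (Finset.univ.filter fun j : Fin n => b j < 0).card = 0 := by
  simp

lemma card_zero_lt (n : ℕ) (b : Fin n → Fin 2) :
    (Finset.univ.filter fun j : Fin n => (0 : Fin 2) < b j).card = wt n b := by
  rw [Finset.card_filter, wt]
  apply Finset.sum_congr rfl
  intro j _
  have h2 := (b j).is_lt
  simp only [Fin.lt_def, Fin.val_zero]
  split_ifs <;> omega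

lemma card_lt_one (n : ℕ) (b : Fin n → Fin 2) :
    ((Finset.univ.filter fun j : Fin n => b j < 1).card : ℤ) = n - wt n b := by
  have h : (Finset.univ.filter fun j : Fin n => b j < 1).card + wt n b = n := by
    rw [Finset.card_filter, wt, ← Finset.sum_add_distrib]
    have h1 : ∀ j ∈ Finset.univ, ((if b j < 1 then 1 else 0) + (b j : ℕ)) = 1 := by
      intro j _
      have h2 := (b j).is_lt
      simp only [Fin.lt_def, Fin.val_one]
      split_ifs <;> omega
    rw [Finset.sum_congr rfl h1]
    simp
  have := wt_le n b
  omega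

/-- The key sum `Σ_{|a|=k} q^{inv(a) - coinv(a)}` over all sequences. -/
def S (n k : ℕ) : K :=
  ∑ a : Fin n → Fin 2,
    if wt n a = k then q ^ ((invf n a : ℤ) - (coinvf n a : ℤ)) else 0

lemma S_cons (n : ℕ) (f : (Fin (n+1) → Fin 2) → K) :
    (∑ a : Fin (n+1) → Fin 2, f a) =
      (∑ b : Fin n → Fin 2, f (Fin.cons 0 b)) + ∑ b : Fin n → Fin 2, f (Fin.cons 1 b) := by
  rw [← (Fin.consEquiv fun _ => Fin 2).sum_comp f, Fintype.sum_prod_type, Fin.sum_univ_two]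
  rfl

lemma S_big (n : ℕ) {k : ℕ} (hk : n < k) : S n k = 0 := by
  unfold S
  apply Finset.sum_eq_zero
  intro a _
  have := wt_le n a
  rw [if_neg (by omega)]

lemma invf_zero (n : ℕ) (b : Fin n → Fin 2) :
    invf (n+1) (Fin.cons 0 b) = invf n b := by
  rw [invf_cons, card_lt_zero, zero_add]

lemma coinvf_zero (n : ℕ) (b : Fin n → Fin 2) :
    coinvf (n+1) (Fin.cons 0 b) = wt n b + coinvf n b := by
  rw [coinvf_cons, card_zero_lt]

lemma coinvf_one (n : ℕ) (b : Fin n → Fin 2) :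
    coinvf (n+1) (Fin.cons 1 b) = coinvf n b := by
  rw [coinvf_cons]
  convert zero_add _
  rw [Finset.card_eq_zero, Finset.filter_eq_empty_iff]
  intro j _
  exact fun h => absurd h (by have := (b j).is_lt; simp [Fin.lt_def]; omega)

lemma invf_one (n : ℕ) (b : Fin n → Fin 2) :
    ((invf (n+1) (Fin.cons 1 b)) : ℤ) = (n : ℤ) - wt n b + invf n b := by
  rw [invf_cons]
  push_cast
  rw [card_lt_one]

lemma S_succ (n k : ℕ) :
    S (n + 1) (k + 1) =
      q ^ (-((k : ℤ) + 1)) * S n (k + 1) + q ^ ((n : ℤ) - k) * S n k := by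
  unfold S
  rw [S_cons, Finset.mul_sum, Finset.mul_sum]
  congr 1
  · apply Finset.sum_congr rfl
    intro b _
    rw [wt_cons, invf_zero, coinvf_zero]
    simp only [Fin.val_zero, zero_add]
    split_ifs with h
    · rw [← zpow_add₀ q_ne_zero]
      congr 1
      push_cast
      omega
    · rw [mul_zero]
  · apply Finset.sum_congr rfl
    intro b _
    rw [wt_cons, coinvf_one]
    simp only [Fin.val_one]
    have hcond : (1 + wt n b = k + 1) ↔ (wt n b = k) := by omega
    rw [if_congr hcond rfl rfl]
    split_ifs with h
    · rw [← zpow_add₀ q_ne_zero]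
      congr 1
      rw [invf_one]
      omega
    · rw [mul_zero]

lemma S_succ_zero (n : ℕ) : S (n + 1) 0 = S n 0 := by
  unfold S
  rw [S_cons]
  have h2 : (∑ b : Fin n → Fin 2,
      if wt (n+1) (Fin.cons 1 b) = 0 then
        q ^ ((invf (n+1) (Fin.cons 1 b) : ℤ) - (coinvf (n+1) (Fin.cons 1 b) : ℤ)) else 0) = 0 := by
    apply Finset.sum_eq_zero
    intro b _
    rw [wt_cons, if_neg (by simp)]
  rw [h2, add_zero]
  apply Finset.sum_congr rfl
  intro b _
  rw [wt_cons, invf_zero, coinvf_zero]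
  simp only [Fin.val_zero, zero_add]
  split_ifs with h
  · congr 1
    omega
  · rfl

lemma S_eq (n : ℕ) : ∀ k : ℕ, k ≤ n → S n k = qbinom n k := by
  induction n with
  | zero =>
    intro k hk
    interval_cases k
    rw [qbinom_zero]
    unfold S
    rw [Fintype.sum_unique]
    simp [wt, invf, coinvf]
  | succ n ih =>
    intro k hk
    match k with
    | 0 => rw [S_succ_zero, ih 0 (by omega), qbinom_zero, qbinom_zero]
    | k' + 1 =>
      rw [S_succ]
      by_cases h : k' + 1 ≤ n
      · rw [ih _ h, ih k' (by omega)]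
        exact (qbinom_rec n k' h).symm
      · have hk' : k' = n := by omega
        subst hk'
        rw [S_big k' (by omega), ih k' le_rfl, qbinom_self, qbinom_self]
        simp


/-- `π_n ∘ i_n = id` on `V_n`; the key computation is
`Σ_{|a|=k} q^{inv(a) - coinv(a)} = [n,k]`. -/

theorem projection_splits_inclusion (n : ℕ) :
    (∀ g : Fin (n + 1) → K, Pmap n (Imap n g) = g) ∧
    (∀ k : Fin (n + 1),
      (∑ a ∈ Finset.univ.filter (fun a : Fin n → Fin 2 => wtFin n a = k),
          q ^ ((invf n a : ℤ) - (coinvf n a : ℤ)))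
        = qbinom n (k : ℕ)) := by
  have hwt : ∀ (a : Fin n → Fin 2) (k : Fin (n + 1)),
      (wtFin n a = k) ↔ (wt n a = (k : ℕ)) := by
    intro a k
    rw [Fin.ext_iff]
    rfl
  have key : ∀ k : Fin (n + 1),
      (∑ a ∈ Finset.univ.filter (fun a : Fin n → Fin 2 => wtFin n a = k),
          q ^ ((invf n a : ℤ) - (coinvf n a : ℤ)))
        = qbinom n (k : ℕ) := by
    intro k
    rw [Finset.sum_filter, ← S_eq n (k : ℕ) (Nat.lt_succ_iff.mp k.is_lt)]
    unfold S
    apply Finset.sum_congr rfl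
    intro a _
    rw [if_congr (hwt a k) rfl rfl]
  refine ⟨?_, key⟩
  intro g
  funext k
  simp only [Pmap, Imap]
  have step : ∀ a ∈ Finset.univ.filter (fun a : Fin n → Fin 2 => wtFin n a = k),
      q ^ (-(coinvf n a : ℤ)) * (qbinom n (k : ℕ))⁻¹ * (q ^ invf n a * g (wtFin n a))
        = q ^ ((invf n a : ℤ) - (coinvf n a : ℤ)) * ((qbinom n (k : ℕ))⁻¹ * g k) := by
    intro a ha
    rw [Finset.mem_filter] at ha
    rw [ha.2, sub_eq_add_neg, zpow_add₀ q_ne_zero, zpow_natCast]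
    ring
  rw [Finset.sum_congr rfl step, ← Finset.sum_mul, key k, ← mul_assoc,
    mul_inv_cancel₀ (qbinom_ne_zero n (k : ℕ)), one_mul]
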